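/- arXiv:2603.24193 — 2 statements merged into one kernel-verified Lean document; each statement's English description precedes it below -/
import Mathlib

section
/- Let (X, d, μ) be a measure space, let T ⊂ X be measurable with μ(T) < ∞, let p ∈ [1,2), let c₁, c₂, D > 0, and let f : X → [0,∞] be measurable. Suppose there is a point q ∈ X such that for all b ∈ T: if d(b,q) ≤ D then f(b) ≤ c₁/d(b,q), and if d(b,q) > D then f(b) ≤ c₁/D. Suppose moreover μ(B(q,r)) ≤ c₂ r² for all 0 < r ≤ D. Then ∫_T f^p dμ ≤ p c₁^p c₂ D^{2-p}/(2-p) + 2 c₁^p μ(T)/D^p. -/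
open MeasureTheory Metric ENNReal

/-!
On `T` the function `f` is finite, so `∫_T f^p` is the layer-cake integral
`p ∫₀^∞ t^(p-1) μ(T ∩ {f > t}) dt`. Below the level `a = c₁/D` the superlevel sets are bounded by
`μ T`, which contributes `a^p μ T`. Above it, `T ∩ {f > t}` lies in the ball `B(q, c₁/t)` of radius
`< D`, so its measure is at most `c₂ c₁² t⁻²`; since `p < 2` this tail integrates to
`p c₁^p c₂ D^(2-p) / (2-p)`.
-/

section
open Set Real

theorem lintegral_Ioc_ofReal_rpow_sub_one {a p : ℝ} (ha : 0 ≤ a) (hp : 0 < p) :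
    ∫⁻ t in Ioc 0 a, ENNReal.ofReal (t ^ (p - 1)) = ENNReal.ofReal (a ^ p / p) := by
  rw [← ofReal_integral_eq_lintegral_ofReal]
  · rw [← intervalIntegral.integral_of_le ha, integral_rpow (Or.inl (by linarith)),
      zero_rpow (by linarith), sub_add_cancel, sub_zero]
  · exact (intervalIntegrable_iff_integrableOn_Ioc_of_le ha).mp
      (intervalIntegral.intervalIntegrable_rpow' (by linarith))
  · filter_upwards [self_mem_ae_restrict measurableSet_Ioc] with t ht
    exact rpow_nonneg ht.1.le _

theorem lintegral_Ioi_ofReal_rpow {a r : ℝ} (ha : 0 < a) (hr : r < -1) :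
    ∫⁻ t in Ioi a, ENNReal.ofReal (t ^ r) = ENNReal.ofReal (-a ^ (r + 1) / (r + 1)) := by
  rw [← ofReal_integral_eq_lintegral_ofReal (integrableOn_Ioi_rpow_of_lt hr ha),
    integral_Ioi_rpow_of_lt hr ha]
  filter_upwards [self_mem_ae_restrict measurableSet_Ioi] with t ht
  exact rpow_nonneg (ha.trans ht).le _

theorem lintegral_ofReal_rpow_le_of_meas_lt_le {α : Type*} [MeasurableSpace α] {ν : Measure α}
    {g : α → ℝ} (hg_nn : 0 ≤ g) (hg : AEMeasurable g ν) {p s a K : ℝ} (hp : 0 < p)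
    (hps : p < s) (ha : 0 < a) (hK : 0 ≤ K)
    (htail : ∀ t, a < t → ν {x | t < g x} ≤ ENNReal.ofReal (K * t ^ (-s))) :
    ∫⁻ x, ENNReal.ofReal (g x ^ p) ∂ν ≤
      ν univ * ENNReal.ofReal (a ^ p) + ENNReal.ofReal (p * K * a ^ (p - s) / (s - p)) := by
  have hpow_meas : Measurable fun t : ℝ => ENNReal.ofReal (t ^ (p - 1)) := by fun_prop
  have hlow : ∫⁻ t in Ioc 0 a, ν {x | t < g x} * ENNReal.ofReal (t ^ (p - 1)) ≤
      ν univ * ENNReal.ofReal (a ^ p / p) := by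
    calc _ ≤ ∫⁻ t in Ioc 0 a, ν univ * ENNReal.ofReal (t ^ (p - 1)) :=
          lintegral_mono fun t => mul_le_mul_left (measure_mono (subset_univ _)) _
      _ = _ := by rw [lintegral_const_mul _ hpow_meas, lintegral_Ioc_ofReal_rpow_sub_one ha.le hp]
  have hhigh : ∫⁻ t in Ioi a, ν {x | t < g x} * ENNReal.ofReal (t ^ (p - 1)) ≤
      ENNReal.ofReal K * ENNReal.ofReal (a ^ (p - s) / (s - p)) := by
    calc _ ≤ ∫⁻ t in Ioi a, ENNReal.ofReal K * ENNReal.ofReal (t ^ (p - 1 - s)) := by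
          refine setLIntegral_mono (by fun_prop) fun t (ht : a < t) => ?_
          have ht0 : 0 < t := ha.trans ht
          calc _ ≤ ENNReal.ofReal (K * t ^ (-s)) * ENNReal.ofReal (t ^ (p - 1)) :=
                mul_le_mul_left (htail t ht) _
            _ = _ := by
                rw [← ENNReal.ofReal_mul' (rpow_nonneg ht0.le _), ← ENNReal.ofReal_mul hK,
                  mul_assoc, ← rpow_add ht0, neg_add_eq_sub]
      _ = _ := by
          rw [lintegral_const_mul _ (by fun_prop), lintegral_Ioi_ofReal_rpow ha (by linarith),
            show p - 1 - s + 1 = p - s by ring, neg_div, ← div_neg, neg_sub]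
  calc ∫⁻ x, ENNReal.ofReal (g x ^ p) ∂ν
      = ENNReal.ofReal p * ((∫⁻ t in Ioc 0 a, ν {x | t < g x} * ENNReal.ofReal (t ^ (p - 1))) +
          ∫⁻ t in Ioi a, ν {x | t < g x} * ENNReal.ofReal (t ^ (p - 1))) := by
        rw [lintegral_rpow_eq_lintegral_meas_lt_mul ν (.of_forall hg_nn) hg hp,
          ← lintegral_union measurableSet_Ioi (Ioc_disjoint_Ioi le_rfl),
          Ioc_union_Ioi_eq_Ioi ha.le]
    _ ≤ ENNReal.ofReal p * (ν univ * ENNReal.ofReal (a ^ p / p) +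
          ENNReal.ofReal K * ENNReal.ofReal (a ^ (p - s) / (s - p))) := by gcongr
    _ = _ := by
        rw [mul_add, mul_left_comm, ← ENNReal.ofReal_mul hp.le, mul_div_cancel₀ _ hp.ne',
          ← mul_assoc, ← ENNReal.ofReal_mul hp.le, ← ENNReal.ofReal_mul (by positivity),
          mul_div_assoc]

end

theorem toReal_superlevel_inter_subset_closedBall {X : Type*} [MetricSpace X] {T : Set X}
    {f : X → ℝ≥0∞} {q : X} {c₁ D t : ℝ} (hc₁ : 0 ≤ c₁) (hD : 0 < D)
    (hnear : ∀ b ∈ T, dist b q ≤ D → f b ≤ ENNReal.ofReal (c₁ / dist b q))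
    (hfar : ∀ b ∈ T, D < dist b q → f b ≤ ENNReal.ofReal (c₁ / D)) (ht : c₁ / D < t) :
    {b | t < (f b).toReal} ∩ T ⊆ closedBall q (c₁ / t) := by
  rintro b ⟨hb : t < (f b).toReal, hbT⟩
  have ht0 : 0 < t := (div_nonneg hc₁ hD.le).trans_lt ht
  rcases le_or_gt (dist b q) D with hnear_b | hfar_b
  · have hlt : t < c₁ / dist b q :=
      hb.trans_le (toReal_le_of_le_ofReal (by positivity) (hnear b hbT hnear_b))
    have hdist : 0 < dist b q := by
      by_contra! h
      rw [le_antisymm h dist_nonneg, _root_.div_zero] at hlt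
      exact hlt.not_gt ht0
    rw [mem_closedBall, le_div_iff₀ ht0, mul_comm]
    exact ((lt_div_iff₀ hdist).mp hlt).le
  · have := hb.trans_le (toReal_le_of_le_ofReal (by positivity) (hfar b hbT hfar_b))
    exact absurd ht this.not_gt

theorem stmt0_general {X : Type*} [MetricSpace X] [MeasurableSpace X]
    (μ : Measure X) (T : Set X) (hT : MeasurableSet T)
    (p : ℝ) (hp : p ∈ Set.Ico (1:ℝ) 2)
    (c₁ c₂ D : ℝ) (hc₁ : 0 < c₁) (hc₂ : 0 < c₂) (hD : 0 < D)
    (f : X → ℝ≥0∞) (hf : Measurable f) (q : X)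
    (hnear : ∀ b ∈ T, dist b q ≤ D → f b ≤ ENNReal.ofReal (c₁ / dist b q))
    (hfar : ∀ b ∈ T, D < dist b q → f b ≤ ENNReal.ofReal (c₁ / D))
    (hball : ∀ r : ℝ, 0 < r → r ≤ D → μ (closedBall q r) ≤ ENNReal.ofReal (c₂ * r ^ 2)) :
    ∫⁻ b in T, f b ^ p ∂μ ≤
      ENNReal.ofReal (p * c₁ ^ p * c₂ * D ^ (2 - p) / (2 - p)) +
        ENNReal.ofReal (2 * c₁ ^ p / D ^ p) * μ T := by
  obtain ⟨hp1, hp2⟩ := hp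
  have hp0 : 0 < p := by linarith
  have hfin : ∀ b ∈ T, f b ≠ ⊤ := fun b hb => by
    rcases le_or_gt (dist b q) D with h | h
    · exact ne_top_of_le_ne_top ofReal_ne_top (hnear b hb h)
    · exact ne_top_of_le_ne_top ofReal_ne_top (hfar b hb h)
  have htail : ∀ t, c₁ / D < t → μ.restrict T {b | t < (f b).toReal} ≤
      ENNReal.ofReal (c₂ * c₁ ^ 2 * t ^ (-2 : ℝ)) := fun t ht => by
    have ht0 : 0 < t := (div_pos hc₁ hD).trans ht
    have hr : c₁ / t ≤ D := by
      rw [div_le_iff₀ ht0]; rw [div_lt_iff₀ hD] at ht; linarith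
    calc μ.restrict T {b | t < (f b).toReal} ≤ μ (closedBall q (c₁ / t)) := by
          rw [Measure.restrict_apply' hT]
          exact measure_mono (toReal_superlevel_inter_subset_closedBall hc₁.le hD hnear hfar ht)
      _ ≤ ENNReal.ofReal (c₂ * (c₁ / t) ^ 2) := hball _ (div_pos hc₁ ht0) hr
      _ = _ := by rw [Real.rpow_neg ht0.le, Real.rpow_two]; ring_nf
  have hsmall : (c₁ / D) ^ p ≤ 2 * c₁ ^ p / D ^ p := by
    rw [Real.div_rpow hc₁.le hD.le, mul_div_assoc]
    linarith [div_nonneg (Real.rpow_nonneg hc₁.le p) (Real.rpow_nonneg hD.le p)]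
  have hlarge : p * (c₂ * c₁ ^ 2) * (c₁ / D) ^ (p - 2) / (2 - p) =
      p * c₁ ^ p * c₂ * D ^ (2 - p) / (2 - p) := by
    rw [Real.div_rpow hc₁.le hD.le, Real.rpow_sub hc₁, Real.rpow_sub hD, Real.rpow_sub hD,
      Real.rpow_two, Real.rpow_two]
    field_simp
  calc ∫⁻ b in T, f b ^ p ∂μ = ∫⁻ b in T, ENNReal.ofReal ((f b).toReal ^ p) ∂μ :=
        setLIntegral_congr_fun hT fun b hb => by
          rw [← ofReal_rpow_of_nonneg toReal_nonneg hp0.le, ofReal_toReal (hfin b hb)]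
    _ ≤ μ.restrict T Set.univ * ENNReal.ofReal ((c₁ / D) ^ p) +
          ENNReal.ofReal (p * (c₂ * c₁ ^ 2) * (c₁ / D) ^ (p - 2) / (2 - p)) :=
        lintegral_ofReal_rpow_le_of_meas_lt_le (fun _ => toReal_nonneg)
          hf.ennreal_toReal.aemeasurable hp0 hp2 (div_pos hc₁ hD) (by positivity) htail
    _ ≤ _ := by
        rw [Measure.restrict_apply_univ, hlarge, add_comm, mul_comm (μ T)]
        gcongr

theorem stmt0 {X : Type*} [MetricSpace X] [MeasurableSpace X]
    (μ : Measure X) (T : Set X) (hT : MeasurableSet T) (hTfin : μ T < ⊤)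
    (p : ℝ) (hp : p ∈ Set.Ico (1:ℝ) 2)
    (c₁ c₂ D : ℝ) (hc₁ : 0 < c₁) (hc₂ : 0 < c₂) (hD : 0 < D)
    (f : X → ℝ≥0∞) (hf : Measurable f) (q : X)
    (hnear : ∀ b ∈ T, dist b q ≤ D → f b ≤ ENNReal.ofReal (c₁ / dist b q))
    (hfar : ∀ b ∈ T, D < dist b q → f b ≤ ENNReal.ofReal (c₁ / D))
    (hball : ∀ r : ℝ, 0 < r → r ≤ D → μ (closedBall q r) ≤ ENNReal.ofReal (c₂ * r ^ 2)) :
    ∫⁻ b in T, f b ^ p ∂μ ≤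
      ENNReal.ofReal (p * c₁ ^ p * c₂ * D ^ (2 - p) / (2 - p)) +
        ENNReal.ofReal (2 * c₁ ^ p / D ^ p) * μ T :=
  stmt0_general μ T hT p hp c₁ c₂ D hc₁ hc₂ hD f hf q hnear hfar hball
end

section
/- Let (X, d, μ) be a measure space, T ⊂ X measurable with μ(T) < ∞, and let p ∈ [1,2). Let S = {q₁,…,q_s} ⊂ X be a finite nonempty set, and suppose f : T → [0,∞] is measurable with f(b) ≤ c₁ / min(d(b,S), D) for all b ∈ T, where d(b,S) = min_j d(b,q_j), and μ(B(q,r)) ≤ c₂ r² for all q ∈ X and 0 < r ≤ D. Then there exists a constant c₃ > 0 depending only on c₁, c₂, D, μ(T) (not on s or p) such that ∫_T f^p dμ ≤ 2 c₃ s / (2 - p). -/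
/-!
Cover `T` by the cells on which a given `q ∈ S` is a nearest point; on such a cell
`f b ≤ c₁ / min (d(b, q), D)`, so it suffices to bound the integral around one centre `q`.
Outside `closedBall q D` we have `f ^ p ≤ (c₁ / D) ^ p`, costing `(c₁ / D) ^ p μ(T)`. Inside, the
dyadic annulus `D / 2 ^ (k + 1) < d(b, q) ≤ D / 2 ^ k` has measure at most `c₂ (D / 2 ^ k) ^ 2`
and carries `f ^ p ≤ (2 ^ (k + 1) c₁ / D) ^ p`, so the annuli contribute a geometric series of
ratio `2 ^ p / 4 ≤ p / 2`, whose sum is `O(1 / (2 - p))`. Summing over the `s` cells gives the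
factor `s`. No Borel structure is assumed, so cells and annuli need not be measurable: only
monotonicity and countable subadditivity of set integrals are used.
-/

open MeasureTheory Metric ENNReal Set

theorem MeasureTheory.setLIntegral_le_mul_measure_of_forall_le {α : Type*} [MeasurableSpace α]
    {μ : Measure α} {A : Set α} {F : α → ℝ≥0∞} {c : ℝ≥0∞} (hF : ∀ x ∈ A, F x ≤ c) :
    ∫⁻ x in A, F x ∂μ ≤ c * μ A := by
  obtain ⟨g, hg, hgF, hFg⟩ := exists_measurable_le_lintegral_eq (μ.restrict A) F
  have hgc : ∀ᵐ x ∂μ.restrict A, g x ≤ c := by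
    simp only [ae_iff, not_le]
    rw [Measure.restrict_apply (measurableSet_lt measurable_const hg)]
    refine measure_mono_null (fun x ⟨hcg, hx⟩ => ?_) measure_empty
    exact hcg.not_ge ((hgF x).trans (hF x hx))
  calc ∫⁻ x in A, F x ∂μ = ∫⁻ x in A, g x ∂μ := hFg
    _ ≤ ∫⁻ _ in A, c ∂μ := lintegral_mono_ae hgc
    _ = c * μ A := setLIntegral_const A c

theorem Real.two_rpow_le_two_mul {p : ℝ} (hp₁ : 1 ≤ p) (hp₂ : p ≤ 2) : (2:ℝ) ^ p ≤ 2 * p := by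
  have bernoulli := rpow_one_add_le_one_add_mul_self (s := 1) (by norm_num)
    (p := p - 1) (by linarith) (by linarith)
  calc (2:ℝ) ^ p = 2 * (1 + 1) ^ (p - 1) := by
        rw [one_add_one_eq_two, ← Real.rpow_one_add' zero_le_two (by linarith)]; ring_nf
    _ ≤ 2 * p := by linarith

theorem Real.two_rpow_div_one_sub_le {p : ℝ} (hp₁ : 1 ≤ p) (hp₂ : p < 2) :
    (2:ℝ) ^ p / (1 - 2 ^ p / 4) ≤ 8 / (2 - p) := by
  have h := Real.two_rpow_le_two_mul hp₁ hp₂.le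
  rw [div_le_div_iff₀ (by linarith) (by linarith)]
  nlinarith [sq_nonneg (p - 2)]

theorem Real.rpow_le_max_one_sq {x p : ℝ} (hx : 0 ≤ x) (hp₀ : 0 ≤ p) (hp₂ : p ≤ 2) :
    x ^ p ≤ max 1 x ^ 2 :=
  calc x ^ p ≤ max 1 x ^ p := Real.rpow_le_rpow hx (le_max_right _ _) hp₀
    _ ≤ max 1 x ^ (2:ℝ) := Real.rpow_le_rpow_of_exponent_le (le_max_left _ _) hp₂
    _ = max 1 x ^ 2 := Real.rpow_two _

theorem Real.rpow_mul_add_div_sub_le {x m C p : ℝ} (hx : 0 ≤ x) (hm : 0 ≤ m) (hC : 0 ≤ C)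
    (hp₁ : 1 ≤ p) (hp₂ : p < 2) :
    x ^ p * (m + C / (2 - p)) ≤ max 1 x ^ 2 * (m + C) / (2 - p) := by
  have h2p : 0 < 2 - p := by linarith
  calc x ^ p * (m + C / (2 - p)) ≤ max 1 x ^ 2 * (m / (2 - p) + C / (2 - p)) := by
        gcongr
        · exact Real.rpow_le_max_one_sq hx (by linarith) hp₂.le
        · exact le_div_self hm h2p (by linarith)
    _ = max 1 x ^ 2 * (m + C) / (2 - p) := by rw [← add_div, mul_div_assoc]

def Metric.dyadicAnnulus {X : Type*} [PseudoMetricSpace X] (q : X) (D : ℝ) (k : ℕ) : Set X :=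
  closedBall q (D / 2 ^ k) \ closedBall q (D / 2 ^ k / 2)

theorem Metric.closedBall_diff_singleton_subset_iUnion_dyadicAnnulus {X : Type*} [MetricSpace X]
    (q : X) (D : ℝ) : closedBall q D \ {q} ⊆ ⋃ k, dyadicAnnulus q D k := by
  rintro b ⟨hbD, hbq⟩
  have hd : 0 < dist b q := dist_pos.mpr hbq
  obtain ⟨k, hk, hk'⟩ := exists_nat_pow_near (x := D / dist b q) (y := 2)
    ((one_le_div hd).mpr (mem_closedBall.mp hbD)) one_lt_two
  refine mem_iUnion.mpr ⟨k, mem_closedBall.mpr ?_, fun hb => ?_⟩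
  · rw [le_div_iff₀ hd] at hk
    rwa [le_div_iff₀ (by positivity), mul_comm]
  · rw [div_lt_iff₀ hd, pow_succ] at hk'
    rw [mem_closedBall, div_div, le_div_iff₀ (by positivity)] at hb
    linarith

theorem MeasureTheory.setLIntegral_le_card_mul {α ι : Type*} [MeasurableSpace α]
    {μ : Measure α} {T : Set α} {F : α → ℝ≥0∞} {B : ℝ≥0∞} (S : Finset ι) (A : ι → Set α)
    (hT : T ⊆ ⋃ i ∈ S, A i) (hA : ∀ i ∈ S, ∫⁻ x in A i, F x ∂μ ≤ B) :
    ∫⁻ x in T, F x ∂μ ≤ S.card * B :=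
  calc ∫⁻ x in T, F x ∂μ ≤ ∫⁻ x in ⋃ i : S, A i, F x ∂μ :=
        lintegral_mono_set (by simpa only [iUnion_subtype] using hT)
    _ ≤ ∑' i : S, ∫⁻ x in A i, F x ∂μ := lintegral_iUnion_le _ _
    _ = ∑ i ∈ S, ∫⁻ x in A i, F x ∂μ := by
        rw [tsum_fintype, Finset.sum_coe_sort S (fun i => ∫⁻ x in A i, F x ∂μ)]
    _ ≤ S.card * B := by simpa only [nsmul_eq_mul] using Finset.sum_le_card_nsmul S _ B hA

section SingleCenter

variable {X : Type*} [MetricSpace X] [MeasurableSpace X] {μ : Measure X} {A : Set X} {q : X}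
  {F : X → ℝ≥0∞} {c₁ c₂ D p : ℝ}

theorem setLIntegral_rpow_inter_annulus_le (hc₁ : 0 ≤ c₁) (hp : 0 ≤ p)
    (hF : ∀ b ∈ A, F b ≤ ENNReal.ofReal (c₁ / min (dist b q) D)) {r : ℝ} (hr : 0 < r)
    (hrD : r ≤ D) (hball : μ (closedBall q r) ≤ ENNReal.ofReal (c₂ * r ^ 2)) :
    ∫⁻ b in A ∩ (closedBall q r \ closedBall q (r / 2)), F b ^ p ∂μ ≤
      ENNReal.ofReal ((2 * c₁ / r) ^ p * (c₂ * r ^ 2)) := by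
  have hpt : ∀ b ∈ A ∩ (closedBall q r \ closedBall q (r / 2)),
      F b ^ p ≤ ENNReal.ofReal ((2 * c₁ / r) ^ p) := by
    rintro b ⟨hbA, -, hbr⟩
    have hmin : r / 2 ≤ min (dist b q) D :=
      le_min (not_le.mp hbr).le (by linarith)
    have hdiv : c₁ / min (dist b q) D ≤ 2 * c₁ / r :=
      calc c₁ / min (dist b q) D ≤ c₁ / (r / 2) :=
            div_le_div_of_nonneg_left hc₁ (by positivity) hmin
        _ = 2 * c₁ / r := by ring
    rw [← ENNReal.ofReal_rpow_of_nonneg (by positivity) hp]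
    exact ENNReal.rpow_le_rpow ((hF b hbA).trans (ENNReal.ofReal_le_ofReal hdiv)) hp
  calc ∫⁻ b in A ∩ (closedBall q r \ closedBall q (r / 2)), F b ^ p ∂μ
      ≤ ENNReal.ofReal ((2 * c₁ / r) ^ p) * μ (A ∩ (closedBall q r \ closedBall q (r / 2))) :=
        setLIntegral_le_mul_measure_of_forall_le hpt
    _ ≤ ENNReal.ofReal ((2 * c₁ / r) ^ p) * ENNReal.ofReal (c₂ * r ^ 2) := by
        gcongr
        exact (measure_mono (inter_subset_right.trans sdiff_subset)).trans hball
    _ = ENNReal.ofReal ((2 * c₁ / r) ^ p * (c₂ * r ^ 2)) :=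
        (ENNReal.ofReal_mul (by positivity)).symm

theorem setLIntegral_rpow_diff_closedBall_le (hc₁ : 0 ≤ c₁) (hD : 0 ≤ D) (hp : 0 ≤ p)
    (hF : ∀ b ∈ A, F b ≤ ENNReal.ofReal (c₁ / min (dist b q) D)) :
    ∫⁻ b in A \ closedBall q D, F b ^ p ∂μ ≤ ENNReal.ofReal ((c₁ / D) ^ p) * μ A := by
  have hpt : ∀ b ∈ A \ closedBall q D, F b ^ p ≤ ENNReal.ofReal ((c₁ / D) ^ p) := by
    rintro b ⟨hbA, hbD⟩
    have hFb := hF b hbA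
    rw [min_eq_right (not_le.mp hbD).le] at hFb
    rw [← ENNReal.ofReal_rpow_of_nonneg (by positivity) hp]
    exact ENNReal.rpow_le_rpow hFb hp
  exact (setLIntegral_le_mul_measure_of_forall_le hpt).trans (by gcongr; exact sdiff_subset)

theorem setLIntegral_rpow_inter_singleton_eq_zero (hD : 0 ≤ D) (hp : 0 < p)
    (hF : ∀ b ∈ A, F b ≤ ENNReal.ofReal (c₁ / min (dist b q) D)) :
    ∫⁻ b in A ∩ {q}, F b ^ p ∂μ = 0 := by
  refine le_antisymm ((setLIntegral_le_mul_measure_of_forall_le (c := 0) ?_).trans_eq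
    (zero_mul _)) bot_le
  rintro b ⟨hbA, rfl⟩
  -- the junk value `c₁ / 0 = 0` forces `F q = 0`
  have hFb := hF b hbA
  rw [dist_self, min_eq_left hD, _root_.div_zero, ENNReal.ofReal_zero, nonpos_iff_eq_zero] at hFb
  rw [hFb, ENNReal.zero_rpow_of_pos hp]

theorem setLIntegral_rpow_inter_dyadicAnnulus_le (hc₁ : 0 ≤ c₁) (hD : 0 < D) (hp : 0 ≤ p)
    (hball : ∀ r : ℝ, 0 < r → r ≤ D → μ (closedBall q r) ≤ ENNReal.ofReal (c₂ * r ^ 2))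
    (hF : ∀ b ∈ A, F b ≤ ENNReal.ofReal (c₁ / min (dist b q) D)) (k : ℕ) :
    ∫⁻ b in A ∩ dyadicAnnulus q D k, F b ^ p ∂μ ≤
      ENNReal.ofReal ((c₁ / D) ^ p * (2 ^ p * c₂ * D ^ 2) * (2 ^ p / 4) ^ k) := by
  have hr : 0 < D / 2 ^ k := by positivity
  have hrD : D / 2 ^ k ≤ D := div_le_self hD.le (one_le_pow₀ one_le_two)
  refine (setLIntegral_rpow_inter_annulus_le hc₁ hp hF hr hrD
    (hball _ hr hrD)).trans_eq (congrArg ENNReal.ofReal ?_)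
  rw [show 2 * c₁ / (D / 2 ^ k) = c₁ / D * (2 * 2 ^ k) by field_simp,
    Real.mul_rpow (by positivity) (by positivity), Real.mul_rpow zero_le_two (by positivity),
    ← Real.rpow_pow_comm zero_le_two, div_pow _ (4:ℝ),
    show (4:ℝ) ^ k = (2 ^ k) ^ 2 by rw [← pow_mul, mul_comm, pow_mul]; norm_num]
  field_simp

theorem tsum_setLIntegral_rpow_inter_dyadicAnnulus_le (hc₁ : 0 ≤ c₁) (hc₂ : 0 ≤ c₂)
    (hD : 0 < D) (hp₁ : 1 ≤ p) (hp₂ : p < 2)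
    (hball : ∀ r : ℝ, 0 < r → r ≤ D → μ (closedBall q r) ≤ ENNReal.ofReal (c₂ * r ^ 2))
    (hF : ∀ b ∈ A, F b ≤ ENNReal.ofReal (c₁ / min (dist b q) D)) :
    ∑' k, ∫⁻ b in A ∩ dyadicAnnulus q D k, F b ^ p ∂μ ≤
      ENNReal.ofReal ((c₁ / D) ^ p) * ENNReal.ofReal (8 * c₂ * D ^ 2 / (2 - p)) := by
  have ht₁ : (2:ℝ) ^ p / 4 < 1 := by linarith [Real.two_rpow_le_two_mul hp₁ hp₂.le]
  have ht₀ : (0:ℝ) ≤ 2 ^ p / 4 := by positivity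
  set t : ℝ := 2 ^ p / 4
  set a : ℝ := (c₁ / D) ^ p * (2 ^ p * c₂ * D ^ 2)
  calc ∑' k, ∫⁻ b in A ∩ dyadicAnnulus q D k, F b ^ p ∂μ
      ≤ ∑' k : ℕ, ENNReal.ofReal (a * t ^ k) :=
        ENNReal.tsum_le_tsum
          (setLIntegral_rpow_inter_dyadicAnnulus_le hc₁ hD (by linarith) hball hF)
    _ = ENNReal.ofReal (a * (1 - t)⁻¹) := by
      rw [← ENNReal.ofReal_tsum_of_nonneg (fun k => by positivity)
        ((summable_geometric_of_lt_one ht₀ ht₁).mul_left a), tsum_mul_left,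
        tsum_geometric_of_lt_one ht₀ ht₁]
    _ ≤ ENNReal.ofReal ((c₁ / D) ^ p * (8 * c₂ * D ^ 2 / (2 - p))) := by
      refine ENNReal.ofReal_le_ofReal ?_
      calc a * (1 - t)⁻¹ = (c₁ / D) ^ p * (c₂ * D ^ 2) * (2 ^ p / (1 - t)) := by ring
        _ ≤ (c₁ / D) ^ p * (c₂ * D ^ 2) * (8 / (2 - p)) :=
          mul_le_mul_of_nonneg_left (Real.two_rpow_div_one_sub_le hp₁ hp₂) (by positivity)
        _ = (c₁ / D) ^ p * (8 * c₂ * D ^ 2 / (2 - p)) := by ring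
    _ = ENNReal.ofReal ((c₁ / D) ^ p) * ENNReal.ofReal (8 * c₂ * D ^ 2 / (2 - p)) :=
      ENNReal.ofReal_mul (by positivity)

theorem setLIntegral_rpow_le_of_le_div_dist (hc₁ : 0 ≤ c₁) (hc₂ : 0 ≤ c₂) (hD : 0 < D)
    (hp₁ : 1 ≤ p) (hp₂ : p < 2)
    (hball : ∀ r : ℝ, 0 < r → r ≤ D → μ (closedBall q r) ≤ ENNReal.ofReal (c₂ * r ^ 2))
    (hF : ∀ b ∈ A, F b ≤ ENNReal.ofReal (c₁ / min (dist b q) D)) :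
    ∫⁻ b in A, F b ^ p ∂μ ≤
      ENNReal.ofReal ((c₁ / D) ^ p) * (μ A + ENNReal.ofReal (8 * c₂ * D ^ 2 / (2 - p))) := by
  have hcover : A ⊆ (A \ closedBall q D) ∪ ((A ∩ {q}) ∪ ⋃ k, A ∩ dyadicAnnulus q D k) := by
    rw [← inter_iUnion, ← inter_union_distrib_left]
    intro b hb
    by_cases hbD : b ∈ closedBall q D
    · exact Or.inr ⟨hb, (em (b = q)).imp id fun hbq =>
        closedBall_diff_singleton_subset_iUnion_dyadicAnnulus q D ⟨hbD, hbq⟩⟩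
    · exact Or.inl ⟨hb, hbD⟩
  calc ∫⁻ b in A, F b ^ p ∂μ
      ≤ ∫⁻ b in (A \ closedBall q D) ∪ ((A ∩ {q}) ∪ ⋃ k, A ∩ dyadicAnnulus q D k), F b ^ p ∂μ :=
        lintegral_mono_set hcover
    _ ≤ ∫⁻ b in A \ closedBall q D, F b ^ p ∂μ + (∫⁻ b in A ∩ {q}, F b ^ p ∂μ +
          ∑' k, ∫⁻ b in A ∩ dyadicAnnulus q D k, F b ^ p ∂μ) :=
        (lintegral_union_le _ _ _).trans (add_le_add_right
          ((lintegral_union_le _ _ _).trans (add_le_add_right (lintegral_iUnion_le _ _) _)) _)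
    _ ≤ ENNReal.ofReal ((c₁ / D) ^ p) * μ A +
          (0 + ENNReal.ofReal ((c₁ / D) ^ p) * ENNReal.ofReal (8 * c₂ * D ^ 2 / (2 - p))) := by
        rw [setLIntegral_rpow_inter_singleton_eq_zero hD.le (by linarith) hF]
        gcongr
        · exact setLIntegral_rpow_diff_closedBall_le hc₁ hD.le (by linarith) hF
        · exact tsum_setLIntegral_rpow_inter_dyadicAnnulus_le hc₁ hc₂ hD hp₁ hp₂ hball hF
    _ = ENNReal.ofReal ((c₁ / D) ^ p) * (μ A + ENNReal.ofReal (8 * c₂ * D ^ 2 / (2 - p))) := by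
        rw [zero_add, mul_add]

theorem setLIntegral_rpow_le_of_le_div_dist_of_measure_le (hc₁ : 0 ≤ c₁) (hc₂ : 0 ≤ c₂)
    (hD : 0 < D) (hp₁ : 1 ≤ p) (hp₂ : p < 2)
    (hball : ∀ r : ℝ, 0 < r → r ≤ D → μ (closedBall q r) ≤ ENNReal.ofReal (c₂ * r ^ 2))
    (hF : ∀ b ∈ A, F b ≤ ENNReal.ofReal (c₁ / min (dist b q) D)) {m : ℝ} (hm : 0 ≤ m)
    (hμA : μ A ≤ ENNReal.ofReal m) :
    ∫⁻ b in A, F b ^ p ∂μ ≤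
      ENNReal.ofReal (max 1 (c₁ / D) ^ 2 * (m + 8 * c₂ * D ^ 2) / (2 - p)) :=
  calc ∫⁻ b in A, F b ^ p ∂μ
      ≤ ENNReal.ofReal ((c₁ / D) ^ p) * (μ A + ENNReal.ofReal (8 * c₂ * D ^ 2 / (2 - p))) :=
        setLIntegral_rpow_le_of_le_div_dist hc₁ hc₂ hD hp₁ hp₂ hball hF
    _ ≤ ENNReal.ofReal ((c₁ / D) ^ p) *
          (ENNReal.ofReal m + ENNReal.ofReal (8 * c₂ * D ^ 2 / (2 - p))) := by
        gcongr
    _ = ENNReal.ofReal ((c₁ / D) ^ p * (m + 8 * c₂ * D ^ 2 / (2 - p))) := by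
        rw [← ENNReal.ofReal_add hm (div_nonneg (by positivity) (by linarith)),
          ← ENNReal.ofReal_mul (by positivity)]
    _ ≤ ENNReal.ofReal (max 1 (c₁ / D) ^ 2 * (m + 8 * c₂ * D ^ 2) / (2 - p)) :=
        ENNReal.ofReal_le_ofReal <|
          Real.rpow_mul_add_div_sub_le (by positivity) hm (by positivity) hp₁ hp₂

end SingleCenter

theorem stmt1_general {X : Type*} [MetricSpace X] [MeasurableSpace X]
    (μ : Measure X) (T : Set X) (hTfin : μ T < ⊤)
    (c₁ c₂ D : ℝ) (hc₁ : 0 < c₁) (hc₂ : 0 < c₂) (hD : 0 < D)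
    (hball : ∀ (q : X) (r : ℝ), 0 < r → r ≤ D →
      μ (closedBall q r) ≤ ENNReal.ofReal (c₂ * r ^ 2)) :
    ∃ c₃ > (0:ℝ), ∀ p : ℝ, p ∈ Set.Ico (1:ℝ) 2 →
      ∀ (S : Finset X) (hS : S.Nonempty),
      ∀ f : X → ℝ≥0∞, Measurable f →
      (∀ b ∈ T, f b ≤ ENNReal.ofReal (c₁ / min (S.inf' hS fun q => dist b q) D)) →
      ∫⁻ b in T, f b ^ p ∂μ ≤ ENNReal.ofReal (2 * c₃ * S.card / (2 - p)) := by
  set c₃ : ℝ := max 1 (c₁ / D) ^ 2 * ((μ T).toReal + 8 * c₂ * D ^ 2)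
  refine ⟨c₃, by positivity, ?_⟩
  rintro p ⟨hp₁, hp₂⟩ S hS f - hf
  have h2p : 0 < 2 - p := by linarith
  set cell : X → Set X := fun q => {b ∈ T | f b ≤ ENNReal.ofReal (c₁ / min (dist b q) D)}
  have hcover : T ⊆ ⋃ q ∈ S, cell q := fun b hb =>
    have ⟨q, hq, hbq⟩ := S.exists_mem_eq_inf' hS (dist b ·)
    mem_biUnion hq ⟨hb, hbq ▸ hf b hb⟩
  have hcell (q : X) : ∫⁻ b in cell q, f b ^ p ∂μ ≤ ENNReal.ofReal (c₃ / (2 - p)) :=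
    setLIntegral_rpow_le_of_le_div_dist_of_measure_le hc₁.le hc₂.le hD hp₁ hp₂ (hball q)
      (fun _ hb => hb.2) ENNReal.toReal_nonneg
      ((measure_mono (sep_subset _ _)).trans (ENNReal.ofReal_toReal hTfin.ne).ge)
  calc ∫⁻ b in T, f b ^ p ∂μ
      ≤ S.card * ENNReal.ofReal (c₃ / (2 - p)) :=
        setLIntegral_le_card_mul S cell hcover fun q _ => hcell q
    _ ≤ ENNReal.ofReal (2 * c₃ * S.card / (2 - p)) := by
        rw [← ENNReal.ofReal_natCast, ← ENNReal.ofReal_mul (by positivity)]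
        refine ENNReal.ofReal_le_ofReal ?_
        rw [mul_div_assoc', div_le_div_iff_of_pos_right h2p]
        nlinarith [mul_nonneg (Nat.cast_nonneg S.card : (0:ℝ) ≤ S.card) (by positivity : 0 ≤ c₃)]

theorem stmt1 {X : Type*} [MetricSpace X] [MeasurableSpace X]
    (μ : Measure X) (T : Set X) (hT : MeasurableSet T) (hTfin : μ T < ⊤)
    (c₁ c₂ D : ℝ) (hc₁ : 0 < c₁) (hc₂ : 0 < c₂) (hD : 0 < D)
    (hball : ∀ (q : X) (r : ℝ), 0 < r → r ≤ D →
      μ (closedBall q r) ≤ ENNReal.ofReal (c₂ * r ^ 2)) :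
    ∃ c₃ > (0:ℝ), ∀ p : ℝ, p ∈ Set.Ico (1:ℝ) 2 →
      ∀ (S : Finset X) (hS : S.Nonempty),
      ∀ f : X → ℝ≥0∞, Measurable f →
      (∀ b ∈ T, f b ≤ ENNReal.ofReal (c₁ / min (S.inf' hS fun q => dist b q) D)) →
      ∫⁻ b in T, f b ^ p ∂μ ≤ ENNReal.ofReal (2 * c₃ * S.card / (2 - p)) :=
  stmt1_general μ T hTfin c₁ c₂ D hc₁ hc₂ hD hball
end
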